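/- For nonnegative integers l and r, define p^{LR}_{l,r} = 3·C(l+r, l)·∫₀¹ (1-a)³ · aˡ⁺ʳ/(1+a)^{l+r+1} da. Then the double series ∑_{m≥1} ∑_{l=0}^{m} (l/m)·p^{LR}_{l,m-l} equals 17/2 − 12·ln 2. -/

import Mathlib

noncomputable def pLR (l r : ℕ) : ℝ :=
  3 * (Nat.choose (l + r) l : ℝ) *
    ∫ a in (0:ℝ)..1, (1 - a)^3 * a^(l + r) / (1 + a)^(l + r + 1)

/-!
All terms with `l + r = m + 1` share the integral in `pLR`, so the inner sum collapses via
`∑ l * C(m + 1, l) = (m + 1) * 2 ^ m` to the integral of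
`3 * (1 - a)^3 * a / (1 + a)^2 * (2a / (1 + a))^m`. This is a geometric series in `m` with
nonnegative terms and sum `3a(1 - a)^2 / (1 + a)`, so sum and integral may be swapped, and the
remaining integral is elementary.
-/

open Finset Real MeasureTheory

noncomputable def leftTIntegrand (m : ℕ) (a : ℝ) : ℝ :=
  3 * 2 ^ m * ((1 - a) ^ 3 * a ^ (m + 1) / (1 + a) ^ (m + 2))

lemma sum_div_mul_pLR_eq_integral (m : ℕ) :
    ∑ l ∈ range (m + 2), ((l : ℝ) / ((m : ℝ) + 1)) * pLR l (m + 1 - l)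
      = ∫ a in (0:ℝ)..1, leftTIntegrand m a := by
  have hterm : ∀ l ∈ range (m + 2), ((l : ℝ) / ((m : ℝ) + 1)) * pLR l (m + 1 - l)
      = ((l * (m + 1).choose l : ℕ) : ℝ) * (3 / ((m : ℝ) + 1) *
          ∫ a in (0:ℝ)..1, (1 - a) ^ 3 * a ^ (m + 1) / (1 + a) ^ (m + 2)) := by
    intro l hl
    rw [pLR, Nat.add_sub_of_le (Nat.lt_succ_iff.mp (mem_range.mp hl))]
    push_cast
    ring
  unfold leftTIntegrand
  rw [sum_congr rfl hterm, ← sum_mul, ← Nat.cast_sum, Nat.sum_range_mul_choose,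
    intervalIntegral.integral_const_mul]
  push_cast
  field_simp

lemma leftTIntegrand_eq_mul_geometric (m : ℕ) {a : ℝ} (ha : 1 + a ≠ 0) :
    leftTIntegrand m a = 3 * (1 - a) ^ 3 * a / (1 + a) ^ 2 * (2 * a / (1 + a)) ^ m := by
  rw [leftTIntegrand, div_pow, mul_pow]
  field_simp
  ring

lemma leftTIntegrand_nonneg (m : ℕ) {a : ℝ} (ha₀ : 0 ≤ a) (ha₁ : a ≤ 1) :
    0 ≤ leftTIntegrand m a := by
  have : 0 ≤ 1 - a := by linarith
  unfold leftTIntegrand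
  positivity

lemma hasSum_leftTIntegrand {a : ℝ} (ha₀ : 0 ≤ a) (ha₁ : a ≤ 1) :
    HasSum (fun m => leftTIntegrand m a) (3 * a * (1 - a) ^ 2 / (1 + a)) := by
  have hpos : 0 < 1 + a := by linarith
  rcases ha₁.eq_or_lt with rfl | ha₁
  · simp [leftTIntegrand, hasSum_zero]
  have hratio : 2 * a / (1 + a) < 1 := by rw [div_lt_one hpos]; linarith
  have hsum : 3 * (1 - a) ^ 3 * a / (1 + a) ^ 2 * (1 - 2 * a / (1 + a))⁻¹
      = 3 * a * (1 - a) ^ 2 / (1 + a) := by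
    have : 1 - 2 * a / (1 + a) = (1 - a) / (1 + a) := by field_simp; ring
    rw [this]
    field_simp [(by linarith : (1:ℝ) - a ≠ 0)]
  simp_rw [leftTIntegrand_eq_mul_geometric _ hpos.ne', ← hsum]
  exact (hasSum_geometric_of_lt_one (by positivity) hratio).mul_left _

lemma intervalIntegrable_three_mul_mul_one_sub_sq_div :
    IntervalIntegrable (fun x : ℝ => 3 * x * (1 - x) ^ 2 / (1 + x)) volume 0 1 := by
  refine ContinuousOn.intervalIntegrable (ContinuousOn.div (by fun_prop) (by fun_prop) ?_)
  intro x hx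
  rw [Set.uIcc_of_le zero_le_one] at hx
  linarith [hx.1]

lemma integral_three_mul_mul_one_sub_sq_div :
    ∫ a in (0:ℝ)..1, 3 * a * (1 - a) ^ 2 / (1 + a) = 17 / 2 - 12 * log 2 := by
  have hderiv : ∀ x ∈ Set.uIcc (0:ℝ) 1,
      HasDerivAt (fun x => x ^ 3 - 9 / 2 * x ^ 2 + 12 * x - 12 * log (1 + x))
        (3 * x * (1 - x) ^ 2 / (1 + x)) x := by
    intro x hx
    rw [Set.uIcc_of_le zero_le_one] at hx
    have hpos : 0 < 1 + x := by linarith [hx.1]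
    have hlog : HasDerivAt (fun x => log (1 + x)) (1 / (1 + x)) x := by
      simpa using ((hasDerivAt_id x).const_add 1).log hpos.ne'
    have h : HasDerivAt (fun x => x ^ 3 - 9 / 2 * x ^ 2 + 12 * x - 12 * log (1 + x)) _ x :=
      (((hasDerivAt_pow 3 x).sub ((hasDerivAt_pow 2 x).const_mul (9 / 2))).add
        ((hasDerivAt_id x).const_mul 12)).sub (hlog.const_mul 12)
    convert h using 1
    field_simp
    ring
  rw [intervalIntegral.integral_eq_sub_of_hasDerivAt hderiv
    intervalIntegrable_three_mul_mul_one_sub_sq_div]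
  norm_num

lemma hasSum_integral_leftTIntegrand :
    HasSum (fun m => ∫ a in (0:ℝ)..1, leftTIntegrand m a) (17 / 2 - 12 * log 2) := by
  rw [← integral_three_mul_mul_one_sub_sq_div]
  have hIoc : ∀ {a : ℝ}, a ∈ Set.uIoc 0 1 → 0 ≤ a ∧ a ≤ 1 := fun ha => by
    rw [Set.uIoc_of_le zero_le_one] at ha
    exact ⟨ha.1.le, ha.2⟩
  -- dominated convergence with the series itself as dominating series
  refine intervalIntegral.hasSum_integral_of_dominated_convergence leftTIntegrand
    (fun m => (by unfold leftTIntegrand; fun_prop : Measurable _).aestronglyMeasurable)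
    (fun m => ae_of_all _ fun a ha => ?_)
    (ae_of_all _ fun a ha => (hasSum_leftTIntegrand (hIoc ha).1 (hIoc ha).2).summable)
    (intervalIntegrable_three_mul_mul_one_sub_sq_div.congr fun a ha =>
      (hasSum_leftTIntegrand (hIoc ha).1 (hIoc ha).2).tsum_eq.symm)
    (ae_of_all _ fun a ha => hasSum_leftTIntegrand (hIoc ha).1 (hIoc ha).2)
  rw [norm_of_nonneg (leftTIntegrand_nonneg m (hIoc ha).1 (hIoc ha).2)]

theorem stit_left_T_sum :
    (∑' m : ℕ, ∑ l ∈ Finset.range (m + 2),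
        ((l : ℝ) / ((m : ℝ) + 1)) * pLR l (m + 1 - l))
      = 17/2 - 12 * Real.log 2 := by
  simp_rw [sum_div_mul_pLR_eq_integral]
  exact hasSum_integral_leftTIntegrand.tsum_eq
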